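/- arXiv:2412.11278 — 3 statements merged into one kernel-verified Lean document; each statement's English description precedes it below -/
import Mathlib

section
/- Let Σ be an n×n symmetric positive definite matrix and ω a full-rank n×q matrix with q<n, and let ω⊥ be a full-rank n×(n−q) matrix whose columns span the orthogonal complement of the column space of ω (i.e., ω⊥'ω = 0). Then the identity matrix decomposes as I_n = Σω(ω'Σω)^{-1}ω' + ω⊥(ω⊥'Σ^{-1}ω⊥)^{-1}ω⊥'Σ^{-1}. -/
open Matrix

/-!
The two summands are the oblique projections onto `col(Σω)` along `ker ω'` and onto `col(ω⊥)`
along `ker(ω⊥'Σ⁻¹)`. Since `ω⊥'ω = 0`, each one kills the generators of the other's range, so the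
sum fixes both `col(Σω)` and `col(ω⊥)`. These two subspaces meet trivially and have dimensions
`q` and `n - q`, so they span `ℝⁿ` and the sum is the identity.
-/

namespace Matrix

open LinearMap (range)

variable {l m m₁ m₂ n K : Type*} [Fintype m] [Fintype m₁] [Fintype m₂] [Fintype n] [Field K]

theorem mulVec_injective_iff_rank_eq_card {M : Matrix l m K} :
    Function.Injective M.mulVec ↔ M.rank = Fintype.card m := by
  rw [mulVec_injective_iff, linearIndependent_iff_card_eq_finrank_span, Set.finrank,
    ← rank_eq_finrank_span_cols, eq_comm]

theorem PosDef.transpose_mul_mul_same {S : Matrix n n ℝ} (hS : S.PosDef) {B : Matrix n m ℝ}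
    (hB : Function.Injective B.mulVec) : (Bᵀ * S * B).PosDef := by
  simpa using hS.conjTranspose_mul_mul_same hB

theorem mulVec_eq_self_of_mem_range {M : Matrix n n K} {X : Matrix n m K} (hX : M * X = X)
    {v : n → K} (hv : v ∈ range X.mulVecLin) : M *ᵥ v = v := by
  obtain ⟨a, rfl⟩ := hv
  rw [mulVecLin_apply, mulVec_mulVec, hX]

theorem eq_one_of_mul_eq_self [DecidableEq n] {M : Matrix n n K} {X : Matrix n m₁ K}
    {Y : Matrix n m₂ K} (hX : M * X = X) (hY : M * Y = Y)
    (hXY : range X.mulVecLin ⊔ range Y.mulVecLin = ⊤) : M = 1 := by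
  refine ext_iff_mulVec.mpr fun v => ?_
  obtain ⟨x, hx, y, hy, rfl⟩ := Submodule.mem_sup.mp (hXY ▸ Submodule.mem_top : v ∈ _)
  rw [one_mulVec, mulVec_add, mulVec_eq_self_of_mem_range hX hx,
    mulVec_eq_self_of_mem_range hY hy]

theorem disjoint_range_mulVecLin_of_mul_eq_zero {X : Matrix n m₁ K} {Y : Matrix n m₂ K}
    {L : Matrix m₁ n K} (hLX : Function.Injective (L * X).mulVec) (hLY : L * Y = 0) :
    Disjoint (range X.mulVecLin) (range Y.mulVecLin) := by
  rw [Submodule.disjoint_def]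
  rintro _ ⟨a, rfl⟩ ⟨b, hb⟩
  rw [mulVecLin_apply, mulVecLin_apply] at hb
  have ha : (L * X) *ᵥ a = (L * X) *ᵥ 0 := by
    rw [← mulVec_mulVec, ← hb, mulVec_mulVec, hLY, zero_mulVec, mulVec_zero]
  rw [mulVecLin_apply, hLX ha, mulVec_zero]

/-- The projection onto the column space of `X` along the kernel of `L`; it is one only when
`L * X` is invertible. -/
noncomputable def obliqueProj [DecidableEq m] (X : Matrix n m K) (L : Matrix m n K) :
    Matrix n n K :=
  X * (L * X)⁻¹ * L

theorem obliqueProj_mul_self [DecidableEq m] {X : Matrix n m K} {L : Matrix m n K}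
    (h : IsUnit (L * X)) : obliqueProj X L * X = X := by
  rw [obliqueProj, Matrix.mul_assoc, Matrix.mul_assoc,
    nonsing_inv_mul _ ((isUnit_iff_isUnit_det _).mp h), Matrix.mul_one]

theorem obliqueProj_mul_eq_zero [DecidableEq m] {X : Matrix n m K} {L : Matrix m n K}
    {Y : Matrix n l K} (h : L * Y = 0) : obliqueProj X L * Y = 0 := by
  rw [obliqueProj, Matrix.mul_assoc, h, Matrix.mul_zero]

theorem obliqueProj_add_obliqueProj_eq_one [DecidableEq n] [DecidableEq m₁] [DecidableEq m₂]
    {X₁ : Matrix n m₁ K} {L₁ : Matrix m₁ n K} {X₂ : Matrix n m₂ K} {L₂ : Matrix m₂ n K}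
    (h₁ : IsUnit (L₁ * X₁)) (h₂ : IsUnit (L₂ * X₂)) (h₁₂ : L₁ * X₂ = 0) (h₂₁ : L₂ * X₁ = 0)
    (hcard : Fintype.card m₁ + Fintype.card m₂ = Fintype.card n) :
    obliqueProj X₁ L₁ + obliqueProj X₂ L₂ = 1 := by
  have hLX₁ := mulVec_injective_iff_isUnit.mpr h₁
  have hLX₂ := mulVec_injective_iff_isUnit.mpr h₂
  have hX₁ : Function.Injective X₁.mulVec := fun a b h => hLX₁ (by simp only [← mulVec_mulVec, h])
  have hX₂ : Function.Injective X₂.mulVec := fun a b h => hLX₂ (by simp only [← mulVec_mulVec, h])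
  have hspan : range X₁.mulVecLin ⊔ range X₂.mulVecLin = ⊤ := by
    refine Submodule.eq_top_of_disjoint _ _ ?_
      (disjoint_range_mulVecLin_of_mul_eq_zero hLX₁ h₁₂)
    rw [LinearMap.finrank_range_of_inj hX₁, LinearMap.finrank_range_of_inj hX₂,
      Module.finrank_fintype_fun_eq_card, Module.finrank_fintype_fun_eq_card,
      Module.finrank_fintype_fun_eq_card, hcard]
  refine eq_one_of_mul_eq_self (X := X₁) (Y := X₂) ?_ ?_ hspan
  · rw [Matrix.add_mul, obliqueProj_mul_self h₁, obliqueProj_mul_eq_zero h₂₁, add_zero]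
  · rw [Matrix.add_mul, obliqueProj_mul_self h₂, obliqueProj_mul_eq_zero h₁₂, zero_add]

end Matrix

theorem identity_decomposition_general
    (n q : ℕ)
    (S : Matrix (Fin n) (Fin n) ℝ) (hS : S.PosDef)
    (ω : Matrix (Fin n) (Fin q) ℝ) (hω : ω.rank = q)
    (ωp : Matrix (Fin n) (Fin (n - q)) ℝ) (hωp : ωp.rank = n - q)
    (horth : ωpᵀ * ω = 0) :
    (1 : Matrix (Fin n) (Fin n) ℝ) =
      S * ω * (ωᵀ * S * ω)⁻¹ * ωᵀ +
        ωp * (ωpᵀ * S⁻¹ * ωp)⁻¹ * ωpᵀ * S⁻¹ := by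
  have hqn : q ≤ n := hω ▸ ω.rank_le_height
  have hω_inj : Function.Injective ω.mulVec :=
    mulVec_injective_iff_rank_eq_card.mpr (by simpa using hω)
  have hωp_inj : Function.Injective ωp.mulVec :=
    mulVec_injective_iff_rank_eq_card.mpr (by simpa using hωp)
  have key := obliqueProj_add_obliqueProj_eq_one (X₁ := S * ω) (L₁ := ωᵀ) (X₂ := ωp)
    (L₂ := ωpᵀ * S⁻¹)
    (by rw [← Matrix.mul_assoc]; exact (hS.transpose_mul_mul_same hω_inj).isUnit)
    (hS.inv.transpose_mul_mul_same hωp_inj).isUnit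
    (by rw [← transpose_eq_zero, transpose_mul, transpose_transpose, horth])
    (by rw [Matrix.mul_assoc, ← Matrix.mul_assoc S⁻¹,
      nonsing_inv_mul _ ((isUnit_iff_isUnit_det _).mp hS.isUnit), Matrix.one_mul, horth])
    (by simp only [Fintype.card_fin]; omega)
  simp only [obliqueProj, Matrix.mul_assoc] at key ⊢
  exact key.symm

/-- Decomposition of the identity matrix (Centoni-Cubadda):
`I_n = Σω(ω'Σω)⁻¹ω' + ω⊥(ω⊥'Σ⁻¹ω⊥)⁻¹ω⊥'Σ⁻¹`, where `Σ` is symmetric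
positive definite, `ω` is `n×q` of full column rank `q < n`, and `ω⊥` is
`n×(n-q)` of full column rank with `ω⊥'ω = 0`. -/
theorem identity_decomposition
    (n q : ℕ) (hq : q < n)
    (S : Matrix (Fin n) (Fin n) ℝ) (hS : S.PosDef)
    (ω : Matrix (Fin n) (Fin q) ℝ) (hω : ω.rank = q)
    (ωp : Matrix (Fin n) (Fin (n - q)) ℝ) (hωp : ωp.rank = n - q)
    (horth : ωpᵀ * ω = 0) :
    (1 : Matrix (Fin n) (Fin n) ℝ) =
      S * ω * (ωᵀ * S * ω)⁻¹ * ωᵀ +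
        ωp * (ωpᵀ * S⁻¹ * ωp)⁻¹ * ωpᵀ * S⁻¹ :=
  identity_decomposition_general n q S hS ω hω ωp hωp horth
end

section
/- (Dimension-reducible VAR: CSC implications) Suppose the n-dimensional VAR Y_t = Σ_{j=1}^p Φ_j Y_{t−j} + ε_t satisfies both Φ_j = α_j ω' (common right space) and ω⊥'Φ_j = 0 for all j (common left null space), where ω is n×q of full column rank and ω⊥'ω = 0 with ω⊥ of full column rank n−q. Then α_j = ω φ_j for some q×q matrices φ_j (assuming ω'ω = I_q), so Y_t = Σ_{j=1}^p ω φ_j ω' Y_{t−j} + ε_t, and moreover ω⊥'Y_t = ω⊥'ε_t, i.e., the n−q linear combinations ω⊥'Y_t equal the corresponding error combinations. -/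
/-!
The square matrix `[ω ω⊥]` has orthonormal columns, hence also orthonormal rows:
`ω ω' + ω⊥ ω⊥' = 1`. Cancelling `ω'` from `ω⊥' α_j ω' = ω⊥' Φ_j = 0` with `ω' ω = 1` gives
`ω⊥' α_j = 0`, so `α_j = ω (ω' α_j)`. Applying `ω⊥'` to the recursion kills every lag term.
-/

open Matrix

namespace Matrix

variable {R : Type*} {m k l : Type*} [Fintype m] [Fintype k]

theorem mul_transpose_add_mul_transpose_eq_one [CommSemiring R] [Fintype l] [DecidableEq m]
    [DecidableEq k] [DecidableEq l] {A : Matrix m k R} {B : Matrix m l R}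
    (hcard : Fintype.card k + Fintype.card l = Fintype.card m)
    (hA : Aᵀ * A = 1) (hB : Bᵀ * B = 1) (hBA : Bᵀ * A = 0) :
    A * Aᵀ + B * Bᵀ = 1 := by
  have hAB : Aᵀ * B = 0 := by simpa using congrArg transpose hBA
  have hrows : (fromCols A B)ᵀ * fromCols A B = 1 := by
    rw [transpose_fromCols, fromRows_mul_fromCols, hA, hB, hAB, hBA, fromBlocks_one]
  rw [← fromCols_mul_fromRows, ← transpose_fromCols]
  exact (mul_eq_one_comm_of_card_eq _ _ _ (by simpa using hcard)).mp hrows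

theorem mul_eq_zero_of_mul_mul_transpose_eq_zero [Semiring R] [DecidableEq k]
    {A : Matrix m k R} {C : Matrix l m R} {X : Matrix m k R}
    (hA : Aᵀ * A = 1) (h : C * (X * Aᵀ) = 0) : C * X = 0 := by
  simpa [Matrix.mul_assoc, hA] using congrArg (· * A) h

theorem eq_mul_transpose_mul_of_transpose_mul_eq_zero [Semiring R] [Fintype l] [DecidableEq m]
    {k' : Type*} {A : Matrix m k R} {B : Matrix m l R} {X : Matrix m k' R}
    (hcomplete : A * Aᵀ + B * Bᵀ = 1) (hX : Bᵀ * X = 0) :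
    X = A * (Aᵀ * X) :=
  calc X = (A * Aᵀ + B * Bᵀ) * X := by rw [hcomplete, Matrix.one_mul]
    _ = A * (Aᵀ * X) := by rw [Matrix.add_mul, Matrix.mul_assoc, Matrix.mul_assoc, hX,
        Matrix.mul_zero, add_zero]

theorem mulVec_sum_mulVec_eq_zero [NonUnitalSemiring R] {ι : Type*} {s : Finset ι}
    {C : Matrix l m R} {Φ : ι → Matrix m m R} (hC : ∀ i, C * Φ i = 0) (v : ι → m → R) :
    C *ᵥ ∑ i ∈ s, Φ i *ᵥ v i = 0 := by
  simp [mulVec_sum, mulVec_mulVec, hC]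

end Matrix

/-- Dimension-reducible VAR: under the common right space condition
`Φ_j = α_j ω'` and common left null space condition `ω⊥'Φ_j = 0`, the loadings
factor as `α_j = ω φ_j`, the VAR becomes `Y_t = Σ_j ω φ_j ω' Y_{t-j} + ε_t`,
and `ω⊥'Y_t = ω⊥'ε_t`. -/
theorem dimension_reducible_VAR
    (n q p : ℕ) (hq : q < n)
    (ω : Matrix (Fin n) (Fin q) ℝ) (hωo : ωᵀ * ω = 1)
    (ωp : Matrix (Fin n) (Fin (n - q)) ℝ) (hωpo : ωpᵀ * ωp = 1)
    (horth : ωpᵀ * ω = 0)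
    (Φ : Fin p → Matrix (Fin n) (Fin n) ℝ)
    (α : Fin p → Matrix (Fin n) (Fin q) ℝ)
    (hA1 : ∀ j, Φ j = α j * ωᵀ)
    (hA3 : ∀ j, ωpᵀ * Φ j = 0)
    (Y ε : ℤ → Fin n → ℝ)
    (hrec : ∀ t : ℤ,
      Y t = (∑ j : Fin p, (Φ j) *ᵥ Y (t - ((j : ℤ) + 1))) + ε t) :
    (∃ φ : Fin p → Matrix (Fin q) (Fin q) ℝ,
      (∀ j, α j = ω * φ j) ∧
      (∀ t : ℤ,
        Y t = (∑ j : Fin p, (ω * φ j * ωᵀ) *ᵥ Y (t - ((j : ℤ) + 1))) + ε t)) ∧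
    (∀ t : ℤ, ωpᵀ *ᵥ Y t = ωpᵀ *ᵥ ε t) := by
  have hcomplete : ω * ωᵀ + ωp * ωpᵀ = 1 :=
    mul_transpose_add_mul_transpose_eq_one (by simp [hq.le]) hωo hωpo horth
  have hα : ∀ j, α j = ω * (ωᵀ * α j) := fun j =>
    eq_mul_transpose_mul_of_transpose_mul_eq_zero hcomplete
      (mul_eq_zero_of_mul_mul_transpose_eq_zero hωo (hA1 j ▸ hA3 j))
  refine ⟨⟨fun j => ωᵀ * α j, hα, fun t => ?_⟩, fun t => ?_⟩
  · simp_rw [← hα, ← hA1]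
    exact hrec t
  · rw [hrec t, mulVec_add, mulVec_sum_mulVec_eq_zero hA3, zero_add]
end

section
/- (Cointegration matrix of the VECIM) Suppose a VECM ΔY_t = α₀β'Y_{t−1} + Σ_{j=1}^{p−1} Π_j ΔY_{t−j} + ε_t satisfies Π_j = α_j ω' for n×q matrices α_j and β = ωγ for a full-rank q×r matrix γ (r ≤ q < n). Then the model can be written as ΔY_t = α₀γ'f_{t−1} + Σ_{j=1}^{p−1} α_j Δf_{t−j} + ε_t with f_t = ω'Y_t, and premultiplication by ω' yields that the indexes satisfy the q-dimensional VECM Δf_t = (ω'α₀)γ'f_{t−1} + Σ_{j=1}^{p−1}(ω'α_j)Δf_{t−j} + ω'ε_t. -/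
open Matrix

/-- VECIM: under `Pi_j = α_j ω'` and `β = ωγ`, the VECM rewrites as
`ΔY_t = α₀γ'f_{t-1} + Σ_j α_j Δf_{t-j} + ε_t` with `f_t = ω'Y_t`, and the
indexes themselves satisfy the `q`-dimensional VECM
`Δf_t = (ω'α₀)γ'f_{t-1} + Σ_j (ω'α_j)Δf_{t-j} + ω'ε_t`. -/
theorem VECIM_representation
    (n q r p : ℕ) (hr : r ≤ q) (hq : q < n)
    (Y ε : ℤ → Fin n → ℝ)
    (α0 : Matrix (Fin n) (Fin r) ℝ)
    (β : Matrix (Fin n) (Fin r) ℝ)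
    (Pi : Fin (p - 1) → Matrix (Fin n) (Fin n) ℝ)
    (ω : Matrix (Fin n) (Fin q) ℝ) (hω : ω.rank = q)
    (γ : Matrix (Fin q) (Fin r) ℝ) (hγ : γ.rank = r)
    (α : Fin (p - 1) → Matrix (Fin n) (Fin q) ℝ)
    (hβ : β = ω * γ)
    (hPi : ∀ j, Pi j = α j * ωᵀ)
    (hrec : ∀ t : ℤ,
      Y t - Y (t - 1) =
        α0 *ᵥ (βᵀ *ᵥ Y (t - 1)) +
        (∑ j : Fin (p - 1),
          (Pi j) *ᵥ (Y (t - ((j : ℤ) + 1)) - Y (t - ((j : ℤ) + 2)))) + ε t) :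
    (∀ t : ℤ,
      Y t - Y (t - 1) =
        α0 *ᵥ (γᵀ *ᵥ (ωᵀ *ᵥ Y (t - 1))) +
        (∑ j : Fin (p - 1),
          (α j) *ᵥ (ωᵀ *ᵥ Y (t - ((j : ℤ) + 1)) - ωᵀ *ᵥ Y (t - ((j : ℤ) + 2)))) +
        ε t) ∧
    (∀ t : ℤ,
      ωᵀ *ᵥ Y t - ωᵀ *ᵥ Y (t - 1) =
        (ωᵀ * α0) *ᵥ (γᵀ *ᵥ (ωᵀ *ᵥ Y (t - 1))) +
        (∑ j : Fin (p - 1),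
          (ωᵀ * α j) *ᵥ (ωᵀ *ᵥ Y (t - ((j : ℤ) + 1)) - ωᵀ *ᵥ Y (t - ((j : ℤ) + 2)))) +
        ωᵀ *ᵥ ε t) := by
  have key : ∀ t : ℤ,
      Y t - Y (t - 1) =
        α0 *ᵥ (γᵀ *ᵥ (ωᵀ *ᵥ Y (t - 1))) +
        (∑ j : Fin (p - 1),
          (α j) *ᵥ (ωᵀ *ᵥ Y (t - ((j : ℤ) + 1)) - ωᵀ *ᵥ Y (t - ((j : ℤ) + 2)))) +
        ε t := by
    intro t
    have h := hrec t
    rw [h]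
    congr 1
    congr 1
    · rw [hβ, transpose_mul, ← mulVec_mulVec]
    · apply Finset.sum_congr rfl
      intro j _
      rw [hPi j, ← mulVec_mulVec, mulVec_sub]
  refine ⟨key, fun t => ?_⟩
  have h := key t
  have : ωᵀ *ᵥ (Y t - Y (t-1)) = ωᵀ *ᵥ (α0 *ᵥ (γᵀ *ᵥ (ωᵀ *ᵥ Y (t - 1))) +
        (∑ j : Fin (p - 1),
          (α j) *ᵥ (ωᵀ *ᵥ Y (t - ((j : ℤ) + 1)) - ωᵀ *ᵥ Y (t - ((j : ℤ) + 2)))) +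
        ε t) := by rw [← h]
  rw [mulVec_sub] at this
  have hs : ωᵀ *ᵥ (∑ j : Fin (p - 1),
      (α j) *ᵥ (ωᵀ *ᵥ Y (t - ((j : ℤ) + 1)) - ωᵀ *ᵥ Y (t - ((j : ℤ) + 2)))) =
      ∑ j : Fin (p - 1),
      ωᵀ *ᵥ ((α j) *ᵥ (ωᵀ *ᵥ Y (t - ((j : ℤ) + 1)) - ωᵀ *ᵥ Y (t - ((j : ℤ) + 2)))) := by
    rw [← mulVecLin_apply, map_sum]
    simp only [mulVecLin_apply]
  rw [this, mulVec_add, mulVec_add, hs]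
  simp only [mulVec_mulVec, Matrix.mul_assoc]
end
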